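/- For every η ≥ 0, the region D^η = { x in the nonnegative orthant of ℝ⁷ : N ≤ Λ/μ + η } is positively invariant for the COVID-19 system: every solution x with x(0) ∈ D^η satisfies x(t) ∈ D^η for all t ≥ 0. -/

import Mathlib

open scoped BigOperators

/-- The vector field of the deterministic SQEAIHR COVID-19 model.
State: `x = (S, Q, E, A, I, H, R)` indexed by `Fin 7`. -/
noncomputable def covidF (Λ b q lam μ σ εA γA dA εI γI dI γH dH θ p β₁ β₂ : ℝ)
    (x : Fin 7 → ℝ) : Fin 7 → ℝ :=
  ![Λ - (β₁ - β₂ * x 4 / (b + x 4)) * x 0 * (x 4 + θ * x 3) + lam * x 1 - (μ + q) * x 0,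
    q * x 0 - (μ + lam) * x 1,
    (β₁ - β₂ * x 4 / (b + x 4)) * x 0 * (x 4 + θ * x 3) - (μ + σ) * x 2,
    (1 - p) * σ * x 2 - (μ + εA + γA + dA) * x 3,
    σ * p * x 2 - (μ + εI + γI + dI) * x 4,
    εI * x 4 + εA * x 3 - (μ + dH + γH) * x 5,
    γH * x 5 + γI * x 4 + γA * x 3 - μ * x 6]

/-- A solution of the system on `[0, ∞)`: a function differentiable (within `[0,∞)`) whose
derivative equals the vector field at every `t ≥ 0`. -/
def IsSolution (F : (Fin 7 → ℝ) → Fin 7 → ℝ) (x : ℝ → Fin 7 → ℝ) : Prop :=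
  ∀ t : ℝ, 0 ≤ t → HasDerivWithinAt x (F (x t)) (Set.Ici (0 : ℝ)) t

/-!
Nonnegativity: the vector field is locally Lipschitz near the orthant (its only singularity is
at `b + I = 0`) and points inward on every face `{xᵢ = 0}`. Comparing `F y` with `F y⁺` bounds
the derivative of `ψ = ∑ (xᵢ⁻)²` by a multiple of `ψ` near any point of the orthant, so Grönwall
keeps `ψ = 0` on a right neighbourhood, and continuous induction propagates nonnegativity to all
times.

Boundedness: summing the equations, `N' = Λ - μN - d_A A - d_I I - d_H H ≤ Λ - μN` on the
orthant, and Grönwall applied to `N - c` shows that `{N ≤ c}` is forward invariant whenever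
`Λ ≤ μc`.
-/

open Set Filter Topology Finset
open scoped NNReal

theorem hasDerivAt_negPart_sq (u : ℝ) : HasDerivAt (fun v : ℝ => v⁻ ^ 2) (-2 * u⁻) u := by
  rcases lt_trichotomy u 0 with hu | rfl | hu
  · have h : (fun v : ℝ => v ^ 2) =ᶠ[𝓝 u] fun v => v⁻ ^ 2 := by
      filter_upwards [gt_mem_nhds hu] with v hv
      rw [negPart_eq_neg.2 hv.le, neg_sq]
    rw [negPart_eq_neg.2 hu.le]
    simpa using (hasDerivAt_pow 2 u).congr_of_eventuallyEq h.symm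
  · rw [hasDerivAt_iff_isLittleO_nhds_zero]
    have h : (fun h : ℝ => h⁻ ^ 2) =O[𝓝 0] fun h => h ^ 2 :=
      Asymptotics.IsBigO.of_bound 1 (Eventually.of_forall fun h => by
        rw [one_mul, norm_pow, norm_pow, Real.norm_eq_abs, abs_of_nonneg (negPart_nonneg h)]
        exact pow_le_pow_left₀ (negPart_nonneg h)
          (by rw [negPart_def]; exact sup_le (neg_le_abs h) (abs_nonneg h)) 2)
    simpa using h.trans_isLittleO (Asymptotics.isLittleO_pow_id one_lt_two)
  · have h : (fun _ : ℝ => (0 : ℝ)) =ᶠ[𝓝 u] fun v => v⁻ ^ 2 := by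
      filter_upwards [lt_mem_nhds hu] with v hv
      rw [negPart_eq_zero.2 hv.le, sq, zero_mul]
    rw [negPart_eq_zero.2 hu.le]
    simpa using (hasDerivAt_const u (0 : ℝ)).congr_of_eventuallyEq h.symm

section OrthantInvariance

variable {ι : Type*} [Fintype ι]

theorem hasDerivWithinAt_sum_negPart_sq {x : ℝ → ι → ℝ} {x' : ι → ℝ} {s : Set ℝ} {t : ℝ}
    (hx : HasDerivWithinAt x x' s t) :
    HasDerivWithinAt (fun t => ∑ i, (x t i)⁻ ^ 2) (∑ i, -2 * (x t i)⁻ * x' i) s t :=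
  HasDerivWithinAt.fun_sum fun i _ =>
    (hasDerivAt_negPart_sq (x t i)).comp_hasDerivWithinAt (h := fun t => x t i) t
      (hasDerivWithinAt_pi.1 hx i)

theorem sum_neg_two_mul_negPart_mul_le {y G : ι → ℝ} {L : ℝ} (hL : 0 ≤ L)
    (hG : ∀ i, y i ≤ 0 → -(L * ∑ j, (y j)⁻) ≤ G i) :
    ∑ i, -2 * (y i)⁻ * G i ≤ 2 * L * Fintype.card ι * ∑ i, (y i)⁻ ^ 2 :=
  calc ∑ i, -2 * (y i)⁻ * G i ≤ ∑ i, 2 * L * ((y i)⁻ * ∑ j, (y j)⁻) := by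
        refine sum_le_sum fun i _ => ?_
        rcases le_or_gt (y i) 0 with h | h
        · nlinarith [hG i h, negPart_nonneg (y i)]
        · rw [negPart_eq_zero.2 h.le]; simp
    _ = 2 * L * (∑ i, (y i)⁻) ^ 2 := by rw [← mul_sum, ← sum_mul, sq]
    _ ≤ 2 * L * (Fintype.card ι * ∑ i, (y i)⁻ ^ 2) := by
        gcongr; exact sq_sum_le_card_mul_sum_sq
    _ = 2 * L * Fintype.card ι * ∑ i, (y i)⁻ ^ 2 := by ring

variable {F : (ι → ℝ) → ι → ℝ}

/-- `y⁺` lies on the face `{y i = 0}` of the orthant, where `F` points inward, and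
`dist y⁺ y = ‖y⁻‖`. -/
theorem eventually_neg_mul_sum_negPart_le (hF : ∀ y, 0 ≤ y → ∀ i, y i = 0 → 0 ≤ F y i)
    {K : ℝ≥0} {U : Set (ι → ℝ)} {y₀ : ι → ℝ} (hy₀ : 0 ≤ y₀) (hU : U ∈ 𝓝 y₀)
    (hFU : LipschitzOnWith K F U) :
    ∀ᶠ y in 𝓝 y₀, ∀ i, y i ≤ 0 → -(K * ∑ j, (y j)⁻) ≤ F y i := by
  obtain ⟨r, hr, hball⟩ := Metric.mem_nhds_iff.1 hU
  filter_upwards [Metric.ball_mem_nhds y₀ hr] with y hy i hi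
  have hy_pos : y⁺ ∈ Metric.ball y₀ r := by
    refine lt_of_le_of_lt ((dist_pi_le_iff dist_nonneg).2 fun j => ?_) hy
    calc dist (y⁺ j) (y₀ j) = |max (y j) 0 - max (y₀ j) 0| := by
          rw [max_eq_left (show (0 : ℝ) ≤ y₀ j from hy₀ j)]; rfl
      _ ≤ |y j - y₀ j| := abs_max_sub_max_le_abs _ _ _
      _ ≤ dist y y₀ := by rw [← Real.dist_eq]; exact dist_le_pi_dist y y₀ j
  have hdist : dist y⁺ y ≤ ∑ j, (y j)⁻ := by
    have hsub : y⁺ - y = y⁻ := by nth_rewrite 2 [← posPart_sub_negPart y]; abel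
    rw [dist_eq_norm, hsub]
    refine (pi_norm_le_iff_of_nonneg (sum_nonneg fun j _ => negPart_nonneg _)).2 fun j => ?_
    rw [Real.norm_eq_abs, Pi.negPart_apply, abs_of_nonneg (negPart_nonneg _)]
    exact single_le_sum (f := fun j => (y j)⁻) (fun j _ => negPart_nonneg _) (mem_univ j)
  have h_face : 0 ≤ F y⁺ i := hF y⁺ (posPart_nonneg y) i (by simp [hi])
  have h_lip := hFU.dist_le_mul _ (hball hy_pos) _ (hball hy)
  have h_comp : F y⁺ i - F y i ≤ dist (F y⁺) (F y) :=
    (le_abs_self _).trans ((Real.dist_eq _ _).symm.trans_le (dist_le_pi_dist _ _ i))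
  calc -(K * ∑ j, (y j)⁻) ≤ -(K * dist y⁺ y) := neg_le_neg (mul_le_mul_of_nonneg_left hdist K.2)
    _ ≤ F y i := by linarith

theorem eventually_nhdsGT_nonneg
    (hF_lip : ∀ y, 0 ≤ y → ∃ K, ∃ U ∈ 𝓝 y, LipschitzOnWith K F U)
    (hF : ∀ y, 0 ≤ y → ∀ i, y i = 0 → 0 ≤ F y i) {x : ℝ → ι → ℝ}
    (hx : ∀ t, 0 ≤ t → HasDerivWithinAt x (F (x t)) (Ici 0) t) {s : ℝ} (hs : 0 ≤ s)
    (hxs : 0 ≤ x s) :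
    ∀ᶠ t in 𝓝[>] s, 0 ≤ x t := by
  obtain ⟨K, U, hU, hFU⟩ := hF_lip _ hxs
  have hcont : ContinuousWithinAt x (Ici s) s :=
    (hx s hs).continuousWithinAt.mono (Ici_subset_Ici.2 hs)
  obtain ⟨u, hsu, hbound⟩ := mem_nhdsGE_iff_exists_Icc_subset.1
    (hcont.tendsto.eventually (eventually_neg_mul_sum_negPart_le hF hxs hU hFU))
  set ψ : ℝ → ℝ := fun t => ∑ i, (x t i)⁻ ^ 2
  have hψ' (t : ℝ) (ht : 0 ≤ t) :
      HasDerivWithinAt ψ (∑ i, -2 * (x t i)⁻ * F (x t) i) (Ici 0) t :=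
    hasDerivWithinAt_sum_negPart_sq (hx t ht)
  have hψ_le : ∀ t ∈ Icc s u, ψ t ≤ gronwallBound 0 (2 * K * Fintype.card ι) 0 (t - s) :=
    le_gronwallBound_of_liminf_deriv_right_le
      (fun t ht => (hψ' t (hs.trans ht.1)).continuousWithinAt.mono fun _ h => hs.trans h.1)
      (fun t ht r hr =>
        ((hψ' t (hs.trans ht.1)).mono (Ici_subset_Ici.2 (hs.trans ht.1))).liminf_right_slope_le hr)
      (sum_eq_zero fun i _ => by simp [negPart_eq_zero.2 (hxs i)]).le
      (fun t ht => by
        simpa using sum_neg_two_mul_negPart_mul_le K.2 (hbound (Ico_subset_Icc_self ht)))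
  filter_upwards [Icc_mem_nhdsGT hsu] with t ht i
  have hψt : ψ t = 0 :=
    le_antisymm (by simpa [gronwallBound_ε0_δ0] using hψ_le t ht)
      (sum_nonneg fun i _ => sq_nonneg _)
  exact negPart_eq_zero.1 <| (pow_eq_zero_iff two_ne_zero).1 <|
    (sum_eq_zero_iff_of_nonneg fun i _ => sq_nonneg _).1 hψt i (mem_univ i)

theorem nonneg_of_hasDerivWithinAt
    (hF_lip : ∀ y, 0 ≤ y → ∃ K, ∃ U ∈ 𝓝 y, LipschitzOnWith K F U)
    (hF : ∀ y, 0 ≤ y → ∀ i, y i = 0 → 0 ≤ F y i) {x : ℝ → ι → ℝ}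
    (hx : ∀ t, 0 ≤ t → HasDerivWithinAt x (F (x t)) (Ici 0) t) (h0 : 0 ≤ x 0) :
    ∀ t, 0 ≤ t → 0 ≤ x t := by
  intro T hT
  have hcont : ContinuousOn x (Icc 0 T) := fun t ht =>
    (hx t ht.1).continuousWithinAt.mono Icc_subset_Ici_self
  have hclosed : IsClosed ({t | 0 ≤ x t} ∩ Icc 0 T) := by
    rw [inter_comm]; exact hcont.preimage_isClosed_of_isClosed isClosed_Icc isClosed_Ici
  exact hclosed.Icc_subset_of_forall_mem_nhdsWithin h0
    (fun t ht => eventually_nhdsGT_nonneg hF_lip hF hx ht.2.1 ht.1) ⟨hT, le_rfl⟩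

end OrthantInvariance

theorem le_of_hasDerivWithinAt_le_sub_mul {f f' : ℝ → ℝ} {Λ μ c : ℝ}
    (hf : ∀ t, 0 ≤ t → HasDerivWithinAt f (f' t) (Ici 0) t)
    (hf' : ∀ t, 0 ≤ t → f' t ≤ Λ - μ * f t) (hc : Λ ≤ μ * c) (h0 : f 0 ≤ c) :
    ∀ t, 0 ≤ t → f t ≤ c := by
  intro T hT
  have := le_gronwallBound_of_liminf_deriv_right_le (f := fun t => f t - c) (δ := 0) (K := -μ)
    (ε := 0) (b := T)
    (fun t ht => ((hf t ht.1).sub_const c).continuousWithinAt.mono Icc_subset_Ici_self)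
    (fun t ht r hr =>
      (((hf t ht.1).mono (Ici_subset_Ici.2 ht.1)).sub_const c).liminf_right_slope_le hr)
    (by linarith) (fun t ht => by linarith [hf' t ht.1]) T ⟨hT, le_rfl⟩
  rw [gronwallBound_ε0_δ0] at this
  linarith

section Covid

variable {Λ b q lam μ σ εA γA dA εI γI dI γH dH θ p β₁ β₂ : ℝ}

theorem contDiffAt_covidF {y : Fin 7 → ℝ} (hy : b + y 4 ≠ 0) :
    ContDiffAt ℝ 1 (covidF Λ b q lam μ σ εA γA dA εI γI dI γH dH θ p β₁ β₂) y := by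
  refine contDiffAt_pi.2 fun i => ?_
  fin_cases i <;> simp only [covidF, Fin.reduceFinMk, Matrix.cons_val] <;>
    fun_prop (disch := exact hy)

theorem sum_covidF (y : Fin 7 → ℝ) :
    ∑ i, covidF Λ b q lam μ σ εA γA dA εI γI dI γH dH θ p β₁ β₂ y i
      = Λ - μ * ∑ i, y i - (dA * y 3 + dI * y 4 + dH * y 5) := by
  simp only [Fin.sum_univ_seven, covidF, Fin.isValue, Matrix.cons_val_zero, Matrix.cons_val_one,
    Matrix.cons_val]
  ring

theorem infection_rate_nonneg (hb : 0 < b) (hβ₂ : 0 ≤ β₂) (hβ : β₂ ≤ β₁) {I : ℝ} (hI : 0 ≤ I) :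
    0 ≤ β₁ - β₂ * I / (b + I) := by
  have : β₂ * I / (b + I) ≤ β₂ := by
    rw [div_le_iff₀ (by positivity)]; nlinarith
  linarith

theorem covidF_nonneg_of_eq_zero (hΛ : 0 ≤ Λ) (hb : 0 < b) (hq : 0 ≤ q) (hlam : 0 ≤ lam)
    (hσ : 0 ≤ σ) (hεA : 0 ≤ εA) (hγA : 0 ≤ γA) (hεI : 0 ≤ εI) (hγI : 0 ≤ γI) (hγH : 0 ≤ γH)
    (hθ : 0 ≤ θ) (hp₀ : 0 ≤ p) (hp₁ : p ≤ 1) (hβ₂ : 0 ≤ β₂) (hβ : β₂ ≤ β₁)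
    {y : Fin 7 → ℝ} (hy : 0 ≤ y) {i : Fin 7} (hi : y i = 0) :
    0 ≤ covidF Λ b q lam μ σ εA γA dA εI γI dI γH dH θ p β₁ β₂ y i := by
  have hy' : ∀ j, 0 ≤ y j := hy
  have hrate := infection_rate_nonneg hb hβ₂ hβ (hy' 4)
  fin_cases i <;> simp only [covidF, Fin.reduceFinMk, Matrix.cons_val] at hi ⊢ <;>
    simp only [hi, mul_zero, zero_mul, sub_zero] <;>
    nlinarith [hy' 0, hy' 1, hy' 2, hy' 3, hy' 4, hy' 5, mul_nonneg hθ (hy' 3),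
      mul_nonneg (mul_nonneg hrate (hy' 0)) (add_nonneg (hy' 4) (mul_nonneg hθ (hy' 3))),
      mul_nonneg (mul_nonneg (sub_nonneg.2 hp₁) hσ) (hy' 2), mul_nonneg (mul_nonneg hσ hp₀) (hy' 2)]

end Covid

/-- for every `η ≥ 0`, the region
`D^η = { x ≥ 0 : N(x) ≤ Λ/μ + η }` is positively invariant. -/
theorem covid_region_Deta_positively_invariant
    (Λ b q lam μ σ εA γA dA εI γI dI γH dH θ p β₁ β₂ : ℝ)
    (hΛ : 0 < Λ) (hb : 0 < b) (hq : 0 < q) (hlam : 0 < lam) (hμ : 0 < μ)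
    (hσ : 0 < σ) (hεA : 0 < εA) (hγA : 0 < γA) (hdA : 0 < dA)
    (hεI : 0 < εI) (hγI : 0 < γI) (hdI : 0 < dI) (hγH : 0 < γH) (hdH : 0 < dH)
    (hθ : θ ∈ Set.Ioo (0 : ℝ) 1) (hp : p ∈ Set.Ioo (0 : ℝ) 1)
    (hβ₂ : 0 < β₂) (hβ : β₂ ≤ β₁)
    (η : ℝ) (hη : 0 ≤ η)
    (x : ℝ → Fin 7 → ℝ)
    (hx : IsSolution (covidF Λ b q lam μ σ εA γA dA εI γI dI γH dH θ p β₁ β₂) x)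
    (h0 : (∀ i, 0 ≤ x 0 i) ∧ (∑ i, x 0 i) ≤ Λ / μ + η) :
    ∀ t : ℝ, 0 ≤ t → (∀ i, 0 ≤ x t i) ∧ (∑ i, x t i) ≤ Λ / μ + η := by
  have hnonneg : ∀ t, 0 ≤ t → 0 ≤ x t :=
    nonneg_of_hasDerivWithinAt (x := x)
      (fun y hy =>
        (contDiffAt_covidF (add_pos_of_pos_of_nonneg hb (hy 4)).ne').exists_lipschitzOnWith)
      (fun y hy i hi => covidF_nonneg_of_eq_zero hΛ.le hb hq.le hlam.le hσ.le hεA.le hγA.le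
        hεI.le hγI.le hγH.le hθ.1.le hp.1.le hp.2.le hβ₂.le hβ hy hi)
      hx h0.1
  have hN : ∀ t, 0 ≤ t → ∑ i, x t i ≤ Λ / μ + η := by
    refine le_of_hasDerivWithinAt_le_sub_mul (Λ := Λ) (μ := μ)
      (fun t ht => HasDerivWithinAt.fun_sum fun i _ => hasDerivWithinAt_pi.1 (hx t ht) i)
      (fun t ht => ?_) ?_ h0.2
    · rw [sum_covidF]
      have := hnonneg t ht
      linarith [mul_nonneg hdA.le (this 3), mul_nonneg hdI.le (this 4),
        mul_nonneg hdH.le (this 5)]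
    · rw [mul_add, mul_div_cancel₀ _ hμ.ne']
      linarith [mul_nonneg hμ.le hη]
  exact fun t ht => ⟨hnonneg t ht, hN t ht⟩
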